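/- Fix d ≥ 2, δ > 0 with 18d·[δ + δ·log(1/δ)] ≤ log 3, and an integer n_1 such that k_1 := 3δn_1 is an integer with k_1 ≥ 1; set n_l = l·n_1 and k_l = l·k_1. With 𝒦_l the collections of cubes of the iterated triadic construction with these parameters and K_l = ∪{Q : Q ∈ 𝒦_l}, the nested intersection ∩_{l≥1} K_l has one-dimensional Hausdorff measure zero: ℋ¹(∩_{l≥1} K_l) = 0. -/

import Mathlib

open MeasureTheory Set

noncomputable section

/-- The number of ternary (base-3) digits of `i` equal to `1`. -/
def ternaryOnes (i : ℕ) : ℕ := (Nat.digits 3 i).count 1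

/-- The triadic mass assignment determining the measure `μ`. -/
def ternarySpec (δ : ℝ) (μ : Measure ℝ) : Prop :=
  ∀ (j : ℤ) (n i : ℕ), i < 3 ^ n →
    μ (Set.Ico ((j : ℝ) + (i : ℝ) / 3 ^ n) ((j : ℝ) + ((i : ℝ) + 1) / 3 ^ n)) =
      ENNReal.ofReal (δ ^ (n - ternaryOnes i) * (1 - 2 * δ) ^ ternaryOnes i)

/-- The triadic interval `[i·3⁻ⁿ, (i+1)·3⁻ⁿ) ⊆ [0,1)` of generation `n`, `0 ≤ i < 3 ^ n`. -/
def triIco (n i : ℕ) : Set ℝ := Set.Ico ((i : ℝ) / 3 ^ n) (((i : ℝ) + 1) / 3 ^ n)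

/-- Indices `0 ≤ i < 3 ^ n` of the "heavy" triadic intervals of generation `n` inside `[0,1)`,
those with `μ(I) ≥ δ ^ k · (1 - 2δ) ^ (n - k)`. -/
def goodIdx (δ : ℝ) (μ : Measure ℝ) (n k : ℕ) : Set ℕ :=
  {i | i < 3 ^ n ∧ ENNReal.ofReal (δ ^ k * (1 - 2 * δ) ^ (n - k)) ≤ μ (triIco n i)}

/-- `K(n,k)`: the union of the triadic intervals `I ⊆ [0,1)` of generation `n` with
`μ(I) ≥ δ ^ k · (1 - 2δ) ^ (n - k)`. -/
def Kset (δ : ℝ) (μ : Measure ℝ) (n k : ℕ) : Set ℝ := ⋃ i ∈ goodIdx δ μ n k, triIco n i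

/-- The data (lower-left corner, side length) of the cubes of the `l`-th generation `𝒦_l` of
the iterated construction: `𝒦₀ = {[0,1)^d}` and `𝒦_l` is obtained from `𝒦_{l-1}` by replacing
each cube `Q` by the images under the affine map `A_Q` (taking `[0,1)^d` onto `Q`) of the
cubes of `𝒦^d(n_l, k_l)`. -/
def KData (d : ℕ) (δ : ℝ) (μ : Measure ℝ) (ns ks : ℕ → ℕ) : ℕ → Set ((Fin d → ℝ) × ℝ)
  | 0 => {(fun _ => 0, 1)}
  | l + 1 =>
    {q | ∃ p ∈ KData d δ μ ns ks l, ∃ f : Fin d → ℕ,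
      (∀ j, f j ∈ goodIdx δ μ (ns (l + 1)) (ks (l + 1))) ∧
      q.1 = (fun j => p.1 j + p.2 * (f j : ℝ) / 3 ^ ns (l + 1)) ∧
      q.2 = p.2 / 3 ^ ns (l + 1)}

/-- The half-open cube with lower-left corner `p.1` and side length `p.2`. -/
def cubeOf (d : ℕ) (p : (Fin d → ℝ) × ℝ) : Set (Fin d → ℝ) :=
  Set.pi Set.univ fun j => Set.Ico (p.1 j) (p.1 j + p.2)

/-- `K_l`, the union of the cubes of the collection `𝒦_l`. -/
def bigK (d : ℕ) (δ : ℝ) (μ : Measure ℝ) (ns ks : ℕ → ℕ) (l : ℕ) : Set (Fin d → ℝ) :=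
  ⋃ p ∈ KData d δ μ ns ks l, cubeOf d p

/-- A subset of `ℝ^d = Fin d → ℝ`, viewed in the Euclidean space `ℝ^d`. -/
def toEuc (d : ℕ) (s : Set (Fin d → ℝ)) : Set (EuclideanSpace ℝ (Fin d)) :=
  (MeasurableEquiv.toLp 2 (Fin d → ℝ)) '' s

/-!
The heavy triadic intervals of generation `n` are disjoint subintervals of `[0,1)`, each of
`μ`-mass at least `δ^k (1-2δ)^(n-k)`, while `μ [0,1) = 1`. For `k = 3δn` this bounds their number
by `exp (3δn (1 + log (1/δ)))`, and the hypothesis on `δ` turns this into at most `3^(n/6)` heavy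
cubes of generation `n` in dimension `d`. Hence `𝒦_l` consists of at most `3^(N/6)` cubes of side
`3^(-N)`, where `N = n_1 + ⋯ + n_l`, and these covers of `⋂ K_l` have total diameter at most
`√d · 3^(-5N/6) → 0`.
-/

open Filter Function Topology
open scoped ENNReal NNReal

theorem MeasureTheory.Measure.hausdorffMeasure_eq_zero_of_finset_covers {X ι : Type*}
    [EMetricSpace X] [MeasurableSpace X] [BorelSpace X] {e : ℝ} (he : 0 ≤ e) {s : Set X}
    (F : ℕ → Finset ι) (t : ι → Set X) (r : ℕ → ℝ≥0∞) (hr : Tendsto r atTop (𝓝 0))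
    (hdiam : ∀ l, ∀ i ∈ F l, Metric.ediam (t i) ≤ r l)
    (hcover : ∀ᶠ l in atTop, s ⊆ ⋃ i ∈ F l, t i)
    (hsum : Tendsto (fun l => ((F l).card : ℝ≥0∞) * r l ^ e) atTop (𝓝 0)) :
    μH[e] s = 0 := by
  refine le_antisymm ?_ zero_le
  calc μH[e] s ≤ liminf (fun l => ∑ i : F l, Metric.ediam (t i) ^ e) atTop :=
        hausdorffMeasure_le_liminf_sum e s r hr (fun l (i : F l) => t i)
          (.of_forall fun l i => hdiam l i i.2)
          (hcover.mono fun l hl => hl.trans (by simp [iUnion_subtype]))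
    _ ≤ liminf (fun l => ((F l).card : ℝ≥0∞) * r l ^ e) atTop := by
        refine liminf_le_liminf (.of_forall fun l => ?_)
        calc ∑ i : F l, Metric.ediam (t i) ^ e ≤ ∑ _i : F l, r l ^ e :=
              Finset.sum_le_sum fun i _ => ENNReal.rpow_le_rpow (hdiam l i i.2) he
          _ = _ := by simp
    _ = 0 := hsum.liminf_eq

theorem ediam_toEuc_cubeOf_le (d : ℕ) (p : (Fin d → ℝ) × ℝ) :
    Metric.ediam (toEuc d (cubeOf d p)) ≤ ENNReal.ofReal (Real.sqrt d * p.2) := by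
  have hcube : Metric.ediam (cubeOf d p) ≤ ENNReal.ofReal p.2 :=
    Metric.ediam_pi_le_of_le fun j => by simp [Real.ediam_Ico]
  calc Metric.ediam (toEuc d (cubeOf d p))
      ≤ ((Fintype.card (Fin d) : ℝ≥0) ^ (1 / 2 : ℝ≥0∞).toReal : ℝ≥0) * Metric.ediam (cubeOf d p) :=
        (PiLp.lipschitzWith_toLp 2 fun _ : Fin d => ℝ).ediam_image_le _
    _ ≤ ENNReal.ofReal (Real.sqrt d * p.2) := by
        rw [ENNReal.ofReal_mul (Real.sqrt_nonneg _), ← NNReal.coe_natCast, ← Real.coe_sqrt,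
          ENNReal.ofReal_coe_nnreal, NNReal.sqrt_eq_rpow]
        gcongr
        simp

theorem Real.exp_neg_three_mul_le {x : ℝ} (hx0 : 0 ≤ x) (hx : x ≤ 1 / 6) :
    Real.exp (-(3 * x)) ≤ 1 - 2 * x := by
  rw [Real.exp_neg, inv_le_iff_one_le_mul₀ (Real.exp_pos _)]
  nlinarith [Real.add_one_le_exp (3 * x)]

theorem le_one_sixth_of_le_log_three {d : ℕ} (hd : 1 ≤ d) {δ : ℝ} (hδ0 : 0 < δ) (hδ : δ ≤ 1)
    (hδd : 18 * d * (δ + δ * Real.log (1 / δ)) ≤ Real.log 3) : δ ≤ 1 / 6 := by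
  have hlog : 0 ≤ Real.log (1 / δ) := Real.log_nonneg (by rw [le_div_iff₀ hδ0]; linarith)
  have hlog3 : Real.log 3 ≤ 2 := by
    linarith [Real.log_le_sub_one_of_pos (by norm_num : (0 : ℝ) < 3)]
  have hd' : (1 : ℝ) ≤ d := by exact_mod_cast hd
  nlinarith [mul_nonneg hδ0.le hlog, mul_le_mul_of_nonneg_right hd' (by positivity :
    0 ≤ δ + δ * Real.log (1 / δ))]

open scoped Classical in
def goodFinset (δ : ℝ) (μ : Measure ℝ) (n k : ℕ) : Finset ℕ :=
  (Finset.range (3 ^ n)).filter (· ∈ goodIdx δ μ n k)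

@[simp]
theorem coe_goodFinset (δ : ℝ) (μ : Measure ℝ) (n k : ℕ) :
    (goodFinset δ μ n k : Set ℕ) = goodIdx δ μ n k := by
  ext i
  simp only [goodFinset, Finset.coe_filter, Finset.mem_range, Set.mem_ofPred_eq]
  exact and_iff_right_of_imp And.left

theorem pairwise_disjoint_triIco (n : ℕ) : Pairwise (Disjoint on (triIco n)) := by
  intro i i' hii'
  rw [Function.onFun, Set.disjoint_left]
  rintro x ⟨hi, hi'⟩ ⟨hj, hj'⟩
  have h3 : (0 : ℝ) < 3 ^ n := by positivity
  rw [div_le_iff₀ h3] at hi hj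
  rw [lt_div_iff₀ h3] at hi' hj'
  have : i < i' + 1 := by exact_mod_cast (by linarith : (i : ℝ) < i' + 1)
  have : i' < i + 1 := by exact_mod_cast (by linarith : (i' : ℝ) < i + 1)
  omega

theorem triIco_subset_Ico {n i : ℕ} (hi : i < 3 ^ n) : triIco n i ⊆ Ico 0 1 := by
  have h3 : (0 : ℝ) < 3 ^ n := by positivity
  have hi' : (i : ℝ) + 1 ≤ 3 ^ n := by exact_mod_cast hi
  exact Ico_subset_Ico (by positivity) ((div_le_one h3).2 hi')

theorem card_goodFinset_mul_le (δ : ℝ) (μ : Measure ℝ) (n k : ℕ) :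
    ((goodFinset δ μ n k).card : ℝ≥0∞) * ENNReal.ofReal (δ ^ k * (1 - 2 * δ) ^ (n - k)) ≤
      μ (Ico 0 1) := by
  set G := goodFinset δ μ n k
  have hG : ∀ i ∈ G, i ∈ goodIdx δ μ n k := fun i hi => by rwa [← coe_goodFinset]
  calc (G.card : ℝ≥0∞) * ENNReal.ofReal (δ ^ k * (1 - 2 * δ) ^ (n - k))
      ≤ ∑ i ∈ G, μ (triIco n i) := by
        rw [← nsmul_eq_mul]
        exact Finset.card_nsmul_le_sum _ _ _ fun i hi => (hG i hi).2
    _ = μ (⋃ i ∈ G, triIco n i) :=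
        (measure_biUnion_finset ((pairwise_disjoint_triIco n).set_pairwise _)
          fun _ _ => measurableSet_Ico).symm
    _ ≤ μ (Ico 0 1) := measure_mono (iUnion₂_subset fun i hi => triIco_subset_Ico (hG i hi).1)

theorem measure_Ico_zero_one {δ : ℝ} {μ : Measure ℝ} (hμ : ternarySpec δ μ) :
    μ (Ico 0 1) = 1 := by
  simpa [ternaryOnes] using hμ 0 0 0 one_pos

theorem card_goodFinset_le_exp {δ : ℝ} {μ : Measure ℝ} (hδ0 : 0 < δ) (hδ : δ ≤ 1 / 6)
    (hμ : μ (Ico 0 1) ≤ 1) {n k : ℕ} (hk : (k : ℝ) = 3 * δ * n) :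
    ((goodFinset δ μ n k).card : ℝ) ≤ Real.exp (3 * δ * n * (1 + Real.log (1 / δ))) := by
  set T := δ ^ k * (1 - 2 * δ) ^ (n - k)
  have hT : Real.exp (-(3 * δ * n * (1 + Real.log (1 / δ)))) ≤ T := by
    have hexp : -(3 * δ * n * (1 + Real.log (1 / δ))) = k * Real.log δ + n * -(3 * δ) := by
      rw [one_div, Real.log_inv, hk]
      ring
    calc Real.exp (-(3 * δ * n * (1 + Real.log (1 / δ))))
        = δ ^ k * Real.exp (-(3 * δ)) ^ n := by
          rw [hexp, Real.exp_add, Real.exp_nat_mul, Real.exp_nat_mul, Real.exp_log hδ0]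
      _ ≤ δ ^ k * (1 - 2 * δ) ^ n := by
          gcongr
          exact Real.exp_neg_three_mul_le hδ0.le hδ
      _ ≤ T := mul_le_mul_of_nonneg_left
          (pow_le_pow_of_le_one (by linarith) (by linarith) (Nat.sub_le n k)) (by positivity)
  have hcard : ((goodFinset δ μ n k).card : ℝ) * T ≤ 1 := by
    have := (card_goodFinset_mul_le δ μ n k).trans hμ
    rwa [← ENNReal.ofReal_natCast, ← ENNReal.ofReal_mul (Nat.cast_nonneg _),
      ENNReal.ofReal_le_one] at this
  rw [← div_le_one (Real.exp_pos _), div_eq_mul_inv, ← Real.exp_neg]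
  exact (mul_le_mul_of_nonneg_left hT (Nat.cast_nonneg _)).trans hcard

theorem card_goodFinset_pow_le_exp {d : ℕ} {δ : ℝ} {μ : Measure ℝ} (hδ0 : 0 < δ)
    (hδ : δ ≤ 1 / 6) (hμ : μ (Ico 0 1) ≤ 1)
    (hδd : 18 * d * (δ + δ * Real.log (1 / δ)) ≤ Real.log 3) {n k : ℕ}
    (hk : (k : ℝ) = 3 * δ * n) :
    ((goodFinset δ μ n k).card : ℝ) ^ d ≤ Real.exp (Real.log 3 / 6 * n) := by
  calc ((goodFinset δ μ n k).card : ℝ) ^ d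
      ≤ Real.exp (3 * δ * n * (1 + Real.log (1 / δ))) ^ d :=
        pow_le_pow_left₀ (Nat.cast_nonneg _) (card_goodFinset_le_exp hδ0 hδ hμ hk) d
    _ = Real.exp (d * (3 * δ * n * (1 + Real.log (1 / δ)))) := (Real.exp_nat_mul _ _).symm
    _ ≤ Real.exp (Real.log 3 / 6 * n) := Real.exp_le_exp.2 <| by
        nlinarith [mul_le_mul_of_nonneg_right hδd (Nat.cast_nonneg n : (0 : ℝ) ≤ n)]

namespace KData

variable {d : ℕ} {δ : ℝ} {μ : Measure ℝ} {ns ks : ℕ → ℕ}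

def depth (ns : ℕ → ℕ) (l : ℕ) : ℕ := ∑ j ∈ Finset.range l, ns (j + 1)

theorem depth_succ (ns : ℕ → ℕ) (l : ℕ) : depth ns (l + 1) = depth ns l + ns (l + 1) :=
  Finset.sum_range_succ _ _

theorem tendsto_depth_atTop (hns : ∀ j, 0 < ns (j + 1)) : Tendsto (depth ns) atTop atTop :=
  tendsto_atTop_mono (fun l => by
    simpa [depth] using Finset.card_nsmul_le_sum (Finset.range l) (fun j => ns (j + 1)) 1
      fun j _ => hns j) tendsto_id

theorem side_eq_of_mem {l : ℕ} {q : (Fin d → ℝ) × ℝ} (hq : q ∈ KData d δ μ ns ks l) :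
    q.2 = (3 ^ depth ns l : ℝ)⁻¹ := by
  induction l generalizing q with
  | zero => simp_all [KData, depth]
  | succ l ih =>
    obtain ⟨p, hp, -, -, -, hq⟩ := hq
    rw [hq, ih hp, depth_succ, pow_add, mul_inv, div_eq_mul_inv]

open scoped Classical in
def toFinset (d : ℕ) (δ : ℝ) (μ : Measure ℝ) (ns ks : ℕ → ℕ) :
    ℕ → Finset ((Fin d → ℝ) × ℝ)
  | 0 => {(fun _ => 0, 1)}
  | l + 1 =>
    (toFinset d δ μ ns ks l ×ˢ
        Fintype.piFinset fun _ => goodFinset δ μ (ns (l + 1)) (ks (l + 1))).image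
      fun pf => (fun j => pf.1.1 j + pf.1.2 * (pf.2 j : ℝ) / 3 ^ ns (l + 1),
        pf.1.2 / 3 ^ ns (l + 1))

@[simp]
theorem coe_toFinset (l : ℕ) : (toFinset d δ μ ns ks l : Set _) = KData d δ μ ns ks l := by
  induction l with
  | zero => simp [toFinset, KData]
  | succ l ih =>
    ext q
    simp only [toFinset, Finset.coe_image, Finset.coe_product, Fintype.coe_piFinset, mem_image,
      mem_prod, SetLike.mem_coe, Set.mem_pi, mem_univ, forall_const, Prod.exists, KData, ← ih,
      ← coe_goodFinset, mem_ofPred_eq]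
    constructor
    · rintro ⟨a, b, f, ⟨hab, hf⟩, rfl⟩
      exact ⟨a, b, hab, f, hf, rfl, rfl⟩
    · rintro ⟨a, b, hab, f, hf, h1, h2⟩
      exact ⟨a, b, f, ⟨hab, hf⟩, Prod.ext h1.symm h2.symm⟩

theorem mem_toFinset {l : ℕ} {q : (Fin d → ℝ) × ℝ} :
    q ∈ toFinset d δ μ ns ks l ↔ q ∈ KData d δ μ ns ks l := by
  rw [← Finset.mem_coe, coe_toFinset]

theorem card_toFinset_succ_le (l : ℕ) :
    (toFinset d δ μ ns ks (l + 1)).card ≤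
      (toFinset d δ μ ns ks l).card * (goodFinset δ μ (ns (l + 1)) (ks (l + 1))).card ^ d := by
  rw [toFinset]
  refine Finset.card_image_le.trans ?_
  rw [Finset.card_product, Fintype.card_piFinset_const]

theorem card_toFinset_le_exp {a : ℝ}
    (hstep : ∀ j, ((goodFinset δ μ (ns (j + 1)) (ks (j + 1))).card : ℝ) ^ d ≤
      Real.exp (a * ns (j + 1))) (l : ℕ) :
    ((toFinset d δ μ ns ks l).card : ℝ) ≤ Real.exp (a * depth ns l) := by
  induction l with
  | zero => simp [toFinset, depth]
  | succ l ih =>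
    calc ((toFinset d δ μ ns ks (l + 1)).card : ℝ)
        ≤ (toFinset d δ μ ns ks l).card * (goodFinset δ μ (ns (l + 1)) (ks (l + 1))).card ^ d := by
          exact_mod_cast card_toFinset_succ_le l
      _ ≤ Real.exp (a * depth ns l) * Real.exp (a * ns (l + 1)) := by
          gcongr
          exact hstep l
      _ = Real.exp (a * depth ns (l + 1)) := by
          rw [← Real.exp_add, depth_succ]
          push_cast
          ring_nf

theorem tendsto_card_toFinset_div {a : ℝ} (ha : a < Real.log 3)
    (hstep : ∀ j, ((goodFinset δ μ (ns (j + 1)) (ks (j + 1))).card : ℝ) ^ d ≤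
      Real.exp (a * ns (j + 1))) (hns : Tendsto (depth ns) atTop atTop) :
    Tendsto (fun l => ((toFinset d δ μ ns ks l).card : ℝ) / 3 ^ depth ns l) atTop (𝓝 0) := by
  have hexp : Tendsto (fun l => Real.exp ((a - Real.log 3) * depth ns l)) atTop (𝓝 0) :=
    Real.tendsto_exp_atBot.comp <|
      (tendsto_natCast_atTop_atTop.comp hns).const_mul_atTop_of_neg (by linarith)
  refine squeeze_zero (fun l => by positivity) (fun l => ?_) hexp
  rw [sub_mul, Real.exp_sub, mul_comm (Real.log 3), Real.exp_nat_mul, Real.exp_log three_pos]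
  gcongr
  exact card_toFinset_le_exp hstep l

end KData

theorem toEuc_bigK (d : ℕ) (δ : ℝ) (μ : Measure ℝ) (ns ks : ℕ → ℕ) (l : ℕ) :
    toEuc d (bigK d δ μ ns ks l) = ⋃ p ∈ KData.toFinset d δ μ ns ks l, toEuc d (cubeOf d p) := by
  simp only [toEuc, bigK, image_iUnion₂, ← KData.coe_toFinset, Finset.mem_coe]

theorem hausdorffMeasure_inter_bigK_eq_zero_of_tendsto {d : ℕ} {δ : ℝ} {μ : Measure ℝ}
    {ns ks : ℕ → ℕ} (hdepth : Tendsto (KData.depth ns) atTop atTop)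
    (hcount : Tendsto (fun l => ((KData.toFinset d δ μ ns ks l).card : ℝ) / 3 ^ KData.depth ns l)
      atTop (𝓝 0)) :
    μH[1] (toEuc d (⋂ l ∈ {l : ℕ | 1 ≤ l}, bigK d δ μ ns ks l)) = 0 := by
  refine Measure.hausdorffMeasure_eq_zero_of_finset_covers zero_le_one
    (KData.toFinset d δ μ ns ks) (fun p => toEuc d (cubeOf d p))
    (fun l => ENNReal.ofReal (Real.sqrt d * (3 ^ KData.depth ns l)⁻¹)) ?_ (fun l p hp => ?_) ?_ ?_
  · have hside : Tendsto (fun l => (3 ^ KData.depth ns l : ℝ)⁻¹) atTop (𝓝 0) :=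
      tendsto_inv_atTop_zero.comp <|
        (tendsto_pow_atTop_atTop_of_one_lt (by norm_num : (1 : ℝ) < 3)).comp hdepth
    simpa using ENNReal.tendsto_ofReal (hside.const_mul (Real.sqrt d))
  · rw [← KData.side_eq_of_mem (KData.mem_toFinset.1 hp)]
    exact ediam_toEuc_cubeOf_le d p
  · exact eventually_atTop.2 ⟨1, fun l hl =>
      (image_mono (biInter_subset_of_mem hl)).trans (toEuc_bigK d δ μ ns ks l).le⟩
  · have hsum (l : ℕ) : ((KData.toFinset d δ μ ns ks l).card : ℝ≥0∞) *
        ENNReal.ofReal (Real.sqrt d * (3 ^ KData.depth ns l)⁻¹) ^ (1 : ℝ) =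
        ENNReal.ofReal
          (Real.sqrt d * ((KData.toFinset d δ μ ns ks l).card / 3 ^ KData.depth ns l)) := by
      rw [ENNReal.rpow_one, ← ENNReal.ofReal_natCast, ← ENNReal.ofReal_mul (Nat.cast_nonneg _)]
      ring_nf
    convert ENNReal.tendsto_ofReal (hcount.const_mul (Real.sqrt d)) using 1
    · exact funext hsum
    · simp

/-- With parameters `n_l = l·n₁`, `k_l = l·k₁`, `k₁ = 3δn₁ ≥ 1` and
`18d(δ + δ log(1/δ)) ≤ log 3`, the nested intersection `⋂_{l ≥ 1} K_l` of the iterated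
construction has one-dimensional Hausdorff measure zero. -/
theorem hausdorff_inter_bigK_eq_zero (d : ℕ) (hd : 2 ≤ d) (δ : ℝ) (hδ0 : 0 < δ)
    (hδ : δ ≤ 1 / 3) (hδd : 18 * d * (δ + δ * Real.log (1 / δ)) ≤ Real.log 3)
    (μ : Measure ℝ) (hμ : ternarySpec δ μ) (n1 k1 : ℕ) (hk1 : 1 ≤ k1)
    (hk1' : (k1 : ℝ) = 3 * δ * n1) :
    μH[1] (toEuc d
        (⋂ l ∈ {l : ℕ | 1 ≤ l},
          bigK d δ μ (fun l => l * n1) (fun l => l * k1) l)) = 0 := by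
  have hδ6 : δ ≤ 1 / 6 := le_one_sixth_of_le_log_three (by omega) hδ0 (by linarith) hδd
  have hn1 : 0 < n1 := Nat.pos_of_ne_zero fun h => by simp [h] at hk1'; omega
  have hstep (j : ℕ) :
      ((goodFinset δ μ ((j + 1) * n1) ((j + 1) * k1)).card : ℝ) ^ d ≤
        Real.exp (Real.log 3 / 6 * ((j + 1) * n1 : ℕ)) :=
    card_goodFinset_pow_le_exp hδ0 hδ6 (measure_Ico_zero_one hμ).le hδd
      (by push_cast; rw [hk1']; ring)
  have hdepth := KData.tendsto_depth_atTop (ns := fun l => l * n1)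
    fun j => Nat.mul_pos j.succ_pos hn1
  exact hausdorffMeasure_inter_bigK_eq_zero_of_tendsto hdepth <|
    KData.tendsto_card_toFinset_div (by linarith [Real.log_pos (by norm_num : (1 : ℝ) < 3)])
      hstep hdepth
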